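/- Let K ≥ 1, a_k > 0 with Σ a_k = 1, p_k > 0, q_k ≥ 0 nondecreasing in k (positively monotonically related), with at least two groups having distinct parameters. Let (f_k) solve f_k' = (a_k - f_k)(p_k + q_k F), F = Σ f_m, f_k(0)=0, and define p̄ = Σ a_k p_k, q̄ = Σ a_k q_k. Then F(t) < f_Bass(t; p̄, q̄) for all t > 0, where f_Bass solves f' = (1-f)(p̄ + q̄ f), f(0)=0. (Heterogeneity slows down diffusion.) -/

import Mathlib

/-!
Writing `F = ∑ f k` and `c k = p k + q k * F`, each remaining share solves a linear equation, so
`a k - f k t = a k * exp (-∫₀ᵗ c k)`. The same integrating factor applied to `F' = α + β F` with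
`α > 0` shows `F > 0`, hence `c k` increases with `k` while the weights `exp (-∫₀ᵗ c k)` decrease.
Chebyshev's sum inequality, strict since two groups differ, then gives
`F' = ∑ a k exp (-∫ c k) c k < (∑ a k exp (-∫ c k)) (∑ a k c k) = (1 - F) (p̄ + q̄ F)`:
`F` is a strict subsolution of the Bass equation, and a last integrating-factor argument applied to
`f_Bass - F` gives `F < f_Bass`.
-/

open Real Finset Set

section IntegratingFactor

variable {c D D' : ℝ → ℝ}

theorem hasDerivWithinAt_integral_Ici (hc : ContinuousOn c (Ici 0)) {t : ℝ} (ht : 0 ≤ t) :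
    HasDerivWithinAt (fun s => ∫ x in 0..s, c x) (c t) (Ici 0) t := by
  have hint : IntervalIntegrable c MeasureTheory.volume 0 t :=
    (hc.mono (by rw [uIcc_of_le ht]; exact Icc_subset_Ici_self)).intervalIntegrable
  rcases ht.eq_or_lt with rfl | ht
  · exact intervalIntegral.integral_hasDerivWithinAt_right hint
      ((hc.mono Ioi_subset_Ici_self).stronglyMeasurableAtFilter_nhdsWithin measurableSet_Ioi 0)
      ((hc 0 self_mem_Ici).mono Ioi_subset_Ici_self)
  · exact (intervalIntegral.integral_hasDerivAt_right hint
      ((hc.mono Ioi_subset_Ici_self).stronglyMeasurableAtFilter isOpen_Ioi t ht)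
      (hc.continuousAt (Ici_mem_nhds ht))).hasDerivWithinAt

theorem hasDerivWithinAt_mul_exp_integral (hc : ContinuousOn c (Ici 0))
    (hD : ∀ t ∈ Ici (0 : ℝ), HasDerivWithinAt D (D' t) (Ici 0) t) {t : ℝ} (ht : 0 ≤ t) :
    HasDerivWithinAt (fun s => D s * exp (∫ x in 0..s, c x))
      ((D' t + D t * c t) * exp (∫ x in 0..t, c x)) (Ici 0) t :=
  ((hD t ht).fun_mul (hasDerivWithinAt_integral_Ici hc ht).exp).congr_deriv (by ring)

theorem eq_mul_exp_neg_integral_of_hasDerivWithinAt (hc : ContinuousOn c (Ici 0))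
    (hD : ∀ t ∈ Ici (0 : ℝ), HasDerivWithinAt D (-(D t * c t)) (Ici 0) t) {t : ℝ} (ht : 0 ≤ t) :
    D t = D 0 * exp (-∫ x in 0..t, c x) := by
  have hE s (hs : 0 ≤ s) := hasDerivWithinAt_mul_exp_integral hc hD hs
  have hconst := constant_of_has_deriv_right_zero
    (fun s hs => (hE s hs.1).continuousWithinAt.mono Icc_subset_Ici_self)
    (fun s hs => by simpa using (hE s hs.1).mono (Ici_subset_Ici.mpr hs.1)) t ⟨ht, le_rfl⟩
  simp only [intervalIntegral.integral_same, exp_zero, mul_one] at hconst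
  rw [exp_neg, ← hconst, mul_inv_cancel_right₀ (exp_pos _).ne']

theorem pos_of_hasDerivWithinAt_of_add_mul_pos (hc : ContinuousOn c (Ici 0))
    (hD : ∀ t ∈ Ici (0 : ℝ), HasDerivWithinAt D (D' t) (Ici 0) t) (hD0 : D 0 = 0)
    (hpos : ∀ t > 0, 0 < D' t + D t * c t) {t : ℝ} (ht : 0 < t) : 0 < D t := by
  have hE s (hs : s ∈ Ici (0 : ℝ)) := hasDerivWithinAt_mul_exp_integral hc hD hs
  have hmono : StrictMonoOn (fun s => D s * exp (∫ x in 0..s, c x)) (Ici 0) :=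
    strictMonoOn_of_hasDerivWithinAt_pos (convex_Ici 0) (fun s hs => (hE s hs).continuousWithinAt)
      (fun s hs => (hE s (interior_subset hs)).mono interior_subset)
      (fun s hs => mul_pos (hpos s (by simpa using hs)) (exp_pos _))
  have h := hmono self_mem_Ici ht.le ht
  simp only [hD0, zero_mul] at h
  exact pos_of_mul_pos_left h (exp_pos _).le

end IntegratingFactor

theorem Antivary.weighted_sum_mul_lt {ι : Type*} [Fintype ι] {w x y : ι → ℝ}
    (hw : ∀ i, 0 < w i) (hw1 : ∑ i, w i = 1) (hxy : Antivary x y) {i j : ι}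
    (hy : y i < y j) (hx : x j < x i) :
    ∑ k, w k * (x k * y k) < (∑ k, w k * x k) * ∑ k, w k * y k := by
  have hid : ∑ k, ∑ l, w k * w l * ((x k - x l) * (y k - y l)) =
      2 * (∑ k, w k * (x k * y k) - (∑ k, w k * x k) * ∑ k, w k * y k) := by
    have h k l : w k * w l * ((x k - x l) * (y k - y l)) = w l * (w k * (x k * y k))
        + w k * (w l * (x l * y l)) - (w k * x k) * (w l * y l) - (w k * y k) * (w l * x l) := by
      ring
    simp only [h, sum_add_distrib, sum_sub_distrib, ← sum_mul, ← mul_sum, hw1]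
    ring
  have hterm k l : w k * w l * ((x k - x l) * (y k - y l)) ≤ 0 :=
    mul_nonpos_of_nonneg_of_nonpos (mul_pos (hw k) (hw l)).le (hxy.sub_mul_sub_nonpos l k)
  have hstrict : w i * w j * ((x i - x j) * (y i - y j)) < 0 :=
    mul_neg_of_pos_of_neg (mul_pos (hw i) (hw j))
      (mul_neg_of_pos_of_neg (sub_pos.2 hx) (sub_neg.2 hy))
  have hsum : ∑ k, ∑ l, w k * w l * ((x k - x l) * (y k - y l)) < 0 := by
    calc _ < ∑ _k : ι, (0 : ℝ) :=
          sum_lt_sum (fun k _ => sum_nonpos fun l _ => hterm k l)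
            ⟨i, mem_univ i, by
              simpa using sum_lt_sum (fun l _ => hterm i l) ⟨j, mem_univ j, hstrict⟩⟩
      _ = 0 := sum_const_zero
  linarith

noncomputable def bass (p q t : ℝ) : ℝ :=
  (1 - exp (-(p + q) * t)) / (1 + q / p * exp (-(p + q) * t))

theorem hasDerivAt_bass {p q : ℝ} (hp : 0 < p) (hq : 0 ≤ q) (t : ℝ) :
    HasDerivAt (bass p q) ((1 - bass p q t) * (p + q * bass p q t)) t := by
  have hE : HasDerivAt (fun s => exp (-(p + q) * s)) (-(p + q) * exp (-(p + q) * t)) t := by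
    simpa [mul_comm] using ((hasDerivAt_id t).const_mul (-(p + q))).exp
  have hden : 0 < 1 + q / p * exp (-(p + q) * t) := by positivity
  refine ((hE.const_sub 1).div ((hE.const_mul (q / p)).const_add 1) hden.ne').congr_deriv ?_
  simp only [bass]
  field_simp
  ring

theorem lt_of_hasDerivAt_lt_bass_ode {F F' B : ℝ → ℝ} {p q : ℝ}
    (hF : ∀ t ≥ 0, HasDerivAt F (F' t) t)
    (hB : ∀ t ≥ 0, HasDerivAt B ((1 - B t) * (p + q * B t)) t) (h0 : F 0 = B 0)
    (hlt : ∀ t > 0, F' t < (1 - F t) * (p + q * F t)) {t : ℝ} (ht : 0 < t) : F t < B t := by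
  have hFc : ContinuousOn F (Ici 0) := fun s hs => (hF s hs).continuousAt.continuousWithinAt
  have hBc : ContinuousOn B (Ici 0) := fun s hs => (hB s hs).continuousAt.continuousWithinAt
  -- `(1 - x) * (p + q * x)` has difference quotient `q - p - q * (x + y)` between `x` and `y`
  refine sub_pos.1 (pos_of_hasDerivWithinAt_of_add_mul_pos
    (c := fun s => p - q + q * (B s + F s))
    (continuousOn_const.add (continuousOn_const.mul (hBc.add hFc)))
    (fun s hs => ((hB s hs).sub (hF s hs)).hasDerivWithinAt) (by simp [h0]) (fun s hs => ?_) ht)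
  simp only [Pi.sub_apply]
  linear_combination hlt s hs

theorem integral_lt_integral_of_monotone_of_lt {ι : Type*} [LinearOrder ι] {c : ι → ℝ → ℝ}
    {a b : ℝ} (hab : a < b) (hc : ∀ k, ContinuousOn (c k) (Icc a b))
    (hmono : ∀ s ∈ Icc a b, Monotone fun k => c k s) {i j : ι} (hij : c i b < c j b) :
    ∫ s in a..b, c i s < ∫ s in a..b, c j s := by
  have hlt : i < j := lt_of_not_ge fun hji => hij.not_ge (hmono b ⟨hab.le, le_rfl⟩ hji)
  exact intervalIntegral.integral_lt_integral_of_continuousOn_of_le_of_exists_lt hab (hc i) (hc j)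
    (fun s hs => hmono s (Ioc_subset_Icc_self hs) hlt.le) ⟨b, ⟨hab.le, le_rfl⟩, hij⟩

theorem exists_add_mul_lt_add_mul {ι : Type*} [LinearOrder ι] {p q : ι → ℝ} (hp : Monotone p)
    (hq : Monotone q) (hpq : ∃ i j, (p i, q i) ≠ (p j, q j)) {x : ℝ} (hx : 0 < x) :
    ∃ i j, p i + q i * x < p j + q j * x := by
  obtain ⟨i, j, hne⟩ := hpq
  wlog hij : i ≤ j generalizing i j
  · exact this j i hne.symm (le_of_not_ge hij)
  have hpij := hp hij
  have hqij := hq hij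
  refine ⟨i, j, lt_of_le_of_ne (by gcongr) fun heq => hne ?_⟩
  have hq_eq : q i = q j := le_antisymm hqij (by nlinarith)
  exact Prod.ext (by rw [hq_eq] at heq; linarith) hq_eq

section CompartmentalBass

variable {ι : Type*} [Fintype ι] {a p q : ι → ℝ} {f : ι → ℝ → ℝ}

def IsCompartmentalBassSolution (a p q : ι → ℝ) (f : ι → ℝ → ℝ) : Prop :=
  ∀ k, ∀ t ≥ (0 : ℝ), HasDerivAt (f k) ((a k - f k t) * (p k + q k * ∑ m, f m t)) t

namespace IsCompartmentalBassSolution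

theorem hasDerivAt_sum (hode : IsCompartmentalBassSolution a p q f) {t : ℝ} (ht : 0 ≤ t) :
    HasDerivAt (fun s => ∑ m, f m s) (∑ k, (a k - f k t) * (p k + q k * ∑ m, f m t)) t :=
  HasDerivAt.fun_sum fun k _ => hode k t ht

theorem continuousOn_sum (hode : IsCompartmentalBassSolution a p q f) :
    ContinuousOn (fun s => ∑ m, f m s) (Ici 0) :=
  fun _ ht => (hode.hasDerivAt_sum ht).continuousAt.continuousWithinAt

theorem sub_eq_mul_exp_neg_integral (hf0 : ∀ k, f k 0 = 0)
    (hode : IsCompartmentalBassSolution a p q f) (k : ι) {t : ℝ} (ht : 0 ≤ t) :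
    a k - f k t = a k * exp (-∫ s in 0..t, p k + q k * ∑ m, f m s) := by
  simpa [hf0] using eq_mul_exp_neg_integral_of_hasDerivWithinAt
    (continuousOn_const.add (continuousOn_const.mul hode.continuousOn_sum))
    (fun s hs => ((hode k s hs).const_sub (a k)).hasDerivWithinAt) ht

theorem total_adoption_pos [Nonempty ι] (ha : ∀ k, 0 < a k) (hp : ∀ k, 0 < p k)
    (hf0 : ∀ k, f k 0 = 0) (hode : IsCompartmentalBassSolution a p q f) {t : ℝ} (ht : 0 < t) :
    0 < ∑ m, f m t := by
  -- `F' = α + β F` with `α = ∑ (a k - f k) p k > 0` and `β = ∑ (a k - f k) q k`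
  refine pos_of_hasDerivWithinAt_of_add_mul_pos (c := fun s => -∑ k, (a k - f k s) * q k)
    (continuousOn_finsetSum _ fun k _ => continuousOn_const.sub
      (fun s hs => (hode k s hs).continuousAt.continuousWithinAt) |>.mul continuousOn_const).neg
    (fun s hs => (hode.hasDerivAt_sum hs).hasDerivWithinAt) (by simp [hf0])
    (fun s hs => ?_) ht
  have hα : 0 < ∑ k, (a k - f k s) * p k := sum_pos (fun k _ => mul_pos (by
    rw [hode.sub_eq_mul_exp_neg_integral hf0 k hs.le]; exact mul_pos (ha k) (exp_pos _))
    (hp k)) univ_nonempty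
  convert hα using 1
  simp only [mul_add, ← mul_assoc, sum_add_distrib, ← sum_mul]
  ring

theorem adoption_rate_lt_bass_rate [LinearOrder ι] (ha : ∀ k, 0 < a k) (hsum : ∑ k, a k = 1)
    (hp : ∀ k, 0 < p k) (hp_mono : Monotone p) (hq_mono : Monotone q)
    (hpq : ∃ i j, (p i, q i) ≠ (p j, q j)) (hf0 : ∀ k, f k 0 = 0)
    (hode : IsCompartmentalBassSolution a p q f) {t : ℝ} (ht : 0 < t) :
    ∑ k, (a k - f k t) * (p k + q k * ∑ m, f m t) <
      (1 - ∑ m, f m t) * (∑ k, a k * p k + (∑ k, a k * q k) * ∑ m, f m t) := by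
  have : Nonempty ι := let ⟨i, _⟩ := hpq; ⟨i⟩
  set F := fun s => ∑ m, f m s with hF
  set c := fun k s => p k + q k * F s with hc
  have hF_nonneg : ∀ s ∈ Icc 0 t, 0 ≤ F s := fun s hs => hs.1.eq_or_lt.elim
    (fun h => by simp [hF, ← h, hf0]) (fun h => (hode.total_adoption_pos ha hp hf0 h).le)
  have hc_mono : ∀ s ∈ Icc 0 t, Monotone fun k => c k s := fun s hs =>
    hp_mono.add (hq_mono.mul_const (hF_nonneg s hs))
  have hc_cont : ∀ k, ContinuousOn (c k) (Icc 0 t) := fun k =>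
    (continuousOn_const.add (continuousOn_const.mul hode.continuousOn_sum)).mono
      Icc_subset_Ici_self
  have hanti : ∀ i j, c i t < c j t →
      exp (-∫ s in 0..t, c j s) < exp (-∫ s in 0..t, c i s) := fun i j hij =>
    exp_lt_exp.2 (neg_lt_neg (integral_lt_integral_of_monotone_of_lt ht hc_cont hc_mono hij))
  obtain ⟨i, j, hij⟩ :=
    exists_add_mul_lt_add_mul hp_mono hq_mono hpq (hode.total_adoption_pos ha hp hf0 ht)
  have hu k : a k - f k t = a k * exp (-∫ s in 0..t, c k s) :=
    hode.sub_eq_mul_exp_neg_integral hf0 k ht.le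
  calc ∑ k, (a k - f k t) * c k t
      = ∑ k, a k * (exp (-∫ s in 0..t, c k s) * c k t) := by simp only [hu, mul_assoc]
    _ < (∑ k, a k * exp (-∫ s in 0..t, c k s)) * ∑ k, a k * c k t :=
      Antivary.weighted_sum_mul_lt ha hsum (fun i j h => (hanti i j h).le) hij (hanti i j hij)
    _ = (1 - F t) * (∑ k, a k * p k + (∑ k, a k * q k) * F t) := by
      have hu_avg : ∑ k, a k * exp (-∫ s in 0..t, c k s) = 1 - F t := by
        simp only [← hu, sum_sub_distrib, hsum, hF]
      have hc_avg : ∑ k, a k * c k t = ∑ k, a k * p k + (∑ k, a k * q k) * F t := by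
        simp only [hc, mul_add, sum_add_distrib, ← mul_assoc, ← sum_mul]
      rw [hu_avg, hc_avg]

end IsCompartmentalBassSolution

end CompartmentalBass

theorem heterogeneity_slows_diffusion_general (K : ℕ)
    (a p q : Fin K → ℝ)
    (ha : ∀ k, 0 < a k) (hsum : ∑ k, a k = 1)
    (hp : ∀ k, 0 < p k) (hq : ∀ k, 0 ≤ q k)
    (hpmono : Monotone p) (hqmono : Monotone q)
    (hhet : ∃ i j : Fin K, (p i, q i) ≠ (p j, q j))
    (f : Fin K → ℝ → ℝ) (hf0 : ∀ k, f k 0 = 0)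
    (hode : ∀ k, ∀ t ≥ (0:ℝ),
      HasDerivAt (f k) ((a k - f k t) * (p k + q k * ∑ m, f m t)) t) :
    ∀ t > (0:ℝ),
      (∑ k, f k t) <
        (1 - Real.exp (-((∑ k, a k * p k) + (∑ k, a k * q k)) * t)) /
        (1 + ((∑ k, a k * q k) / (∑ k, a k * p k)) *
            Real.exp (-((∑ k, a k * p k) + (∑ k, a k * q k)) * t)) := by
  have : Nonempty (Fin K) := let ⟨i, _⟩ := hhet; ⟨i⟩
  have hode : IsCompartmentalBassSolution a p q f := hode
  have hp_avg : 0 < ∑ k, a k * p k := sum_pos (fun k _ => mul_pos (ha k) (hp k)) univ_nonempty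
  have hq_avg : 0 ≤ ∑ k, a k * q k := sum_nonneg fun k _ => mul_nonneg (ha k).le (hq k)
  intro t ht
  exact lt_of_hasDerivAt_lt_bass_ode (fun s hs => hode.hasDerivAt_sum hs)
    (fun s _ => hasDerivAt_bass hp_avg hq_avg s) (by simp [hf0, bass])
    (fun s hs => hode.adoption_rate_lt_bass_rate ha hsum hp hpmono hqmono hhet hf0 hs) ht

theorem heterogeneity_slows_diffusion (K : ℕ) (hK : 1 ≤ K)
    (a p q : Fin K → ℝ)
    (ha : ∀ k, 0 < a k) (hsum : ∑ k, a k = 1)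
    (hp : ∀ k, 0 < p k) (hq : ∀ k, 0 ≤ q k)
    (hpmono : Monotone p) (hqmono : Monotone q)
    (hhet : ∃ i j : Fin K, (p i, q i) ≠ (p j, q j))
    (f : Fin K → ℝ → ℝ) (hf0 : ∀ k, f k 0 = 0)
    (hode : ∀ k, ∀ t ≥ (0:ℝ),
      HasDerivAt (f k) ((a k - f k t) * (p k + q k * ∑ m, f m t)) t) :
    ∀ t > (0:ℝ),
      (∑ k, f k t) <
        (1 - Real.exp (-((∑ k, a k * p k) + (∑ k, a k * q k)) * t)) /
        (1 + ((∑ k, a k * q k) / (∑ k, a k * p k)) *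
            Real.exp (-((∑ k, a k * p k) + (∑ k, a k * q k)) * t)) :=
  heterogeneity_slows_diffusion_general K a p q ha hsum hp hq hpmono hqmono hhet f hf0 hode
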